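/- arXiv:1205.1592 — 3 statements merged into one kernel-verified Lean document; each statement's English description precedes it below -/
import Mathlib

section
/- (Undecomposability of type I_n*, Proposition 4.10) For every integer n ≥ 1, the fiber type I_n*, whose standard monodromy matrix is A_{I_n*} = -[[1,n],[0,1]], admits no monodromy decomposition into I_{n+4} + II and no monodromy decomposition into I_{n+4} + I₂. That is, there do not exist B₁, B₂ ∈ SL(2,ℤ) with B₁ conjugate to A_{I_{n+4}} = [[1,n+4],[0,1]], B₂ conjugate to A_{II} = [[1,1],[-1,0]] (respectively B₂ conjugate to A_{I₂} = [[1,2],[0,1]]), and B₁·B₂ conjugate to -[[1,n],[0,1]]. -/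
/-- The special linear group `SL(2, ℤ)`. -/
abbrev SL2Z := Matrix.SpecialLinearGroup (Fin 2) ℤ

/-- `A` is conjugate to `B` in `SL(2, ℤ)`: there is `P ∈ SL(2,ℤ)` with `P * A * P⁻¹ = B`. -/
def ConjTo (A B : SL2Z) : Prop := ∃ P : SL2Z, P * A * P⁻¹ = B

/-- The standard monodromy matrix `A_{I_n} = [[1,n],[0,1]]`. -/
def AI (n : ℤ) : SL2Z := ⟨!![1, n; 0, 1], by simp [Matrix.det_fin_two_of]⟩

/-- The standard monodromy matrix `A_{II} = [[1,1],[-1,0]]`. -/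
def AII : SL2Z := ⟨!![1, 1; -1, 0], by norm_num [Matrix.det_fin_two_of]⟩

/-- The standard monodromy matrix `A_{III} = [[0,1],[-1,0]]`. -/
def AIII : SL2Z := ⟨!![0, 1; -1, 0], by norm_num [Matrix.det_fin_two_of]⟩

/-- The standard monodromy matrix `A_{IV} = [[0,1],[-1,-1]]`. -/
def AIV : SL2Z := ⟨!![0, 1; -1, -1], by norm_num [Matrix.det_fin_two_of]⟩

/-- The standard monodromy matrix `A_{I₀*} = -I`. -/
def negI : SL2Z := ⟨!![-1, 0; 0, -1], by norm_num [Matrix.det_fin_two_of]⟩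

/-- The standard monodromy matrix `A_{I_n*} = -[[1,n],[0,1]]`. -/
def AIstar (n : ℤ) : SL2Z := ⟨!![-1, -n; 0, -1], by simp [Matrix.det_fin_two_of]⟩

/-- The standard monodromy matrix `A_{IV*} = [[-1,-1],[1,0]]`. -/
def AIVstar : SL2Z := ⟨!![-1, -1; 1, 0], by norm_num [Matrix.det_fin_two_of]⟩

/-- The standard monodromy matrix `A_{III*} = [[0,-1],[1,0]]`. -/
def AIIIstar : SL2Z := ⟨!![0, -1; 1, 0], by norm_num [Matrix.det_fin_two_of]⟩

/-- The standard monodromy matrix `A_{II*} = [[0,-1],[1,1]]`. -/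
def AIIstar : SL2Z := ⟨!![0, -1; 1, 1], by norm_num [Matrix.det_fin_two_of]⟩

lemma conjTo_trace {A B : SL2Z} (h : ConjTo A B) :
    Matrix.trace (A : Matrix (Fin 2) (Fin 2) ℤ) = Matrix.trace (B : Matrix (Fin 2) (Fin 2) ℤ) := by
  obtain ⟨P, hP⟩ := h
  have hB : (B : Matrix (Fin 2) (Fin 2) ℤ) = P.1 * A.1 * (P⁻¹).1 := by
    rw [← hP]; simp
  have hinv : (P⁻¹).1 * P.1 = (1 : Matrix (Fin 2) (Fin 2) ℤ) := by
    rw [← Matrix.SpecialLinearGroup.coe_mul, inv_mul_cancel]; simp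
  rw [hB, Matrix.trace_mul_cycle, hinv, Matrix.one_mul]

lemma trace_formula (m n : ℤ) (Q : SL2Z) :
    Matrix.trace (((AI m)⁻¹ * Q * AIstar n * Q⁻¹ : SL2Z) : Matrix (Fin 2) (Fin 2) ℤ)
      = -2 - m * n * (Q.1 1 0)^2 := by
  have hdet : Q.1 0 0 * Q.1 1 1 - Q.1 0 1 * Q.1 1 0 = 1 := by
    have := Q.2
    rw [Matrix.det_fin_two] at this
    linarith
  have hQ : (Q : Matrix (Fin 2) (Fin 2) ℤ) = !![Q.1 0 0, Q.1 0 1; Q.1 1 0, Q.1 1 1] := by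
    rw [← Matrix.eta_fin_two]
  have hQinv : ((Q⁻¹ : SL2Z) : Matrix (Fin 2) (Fin 2) ℤ)
      = !![Q.1 1 1, -Q.1 0 1; -Q.1 1 0, Q.1 0 0] := by
    rw [Matrix.SpecialLinearGroup.SL2_inv_expl]; rfl
  have hAIinv : (((AI m)⁻¹ : SL2Z) : Matrix (Fin 2) (Fin 2) ℤ) = !![1, -m; 0, 1] := by
    rw [Matrix.SpecialLinearGroup.SL2_inv_expl]
    simp [AI]; rfl
  simp only [Matrix.SpecialLinearGroup.coe_mul]
  rw [hAIinv, hQ, hQinv]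
  simp only [AIstar, Matrix.mul_fin_two, Matrix.trace_fin_two_of, Matrix.cons_val', Matrix.cons_val_zero, Matrix.cons_val_one, Matrix.head_cons, Matrix.head_fin_const, Matrix.empty_val', Matrix.cons_val_fin_one, Matrix.of_apply]
  linear_combination (-2 : ℤ) * hdet

lemma key_no_decomp (n t : ℤ) (hn : 1 ≤ n) (ht : 1 ≤ t) (B₁ B₂ : SL2Z)
    (h1 : ConjTo B₁ (AI (n + 4)))
    (htr : Matrix.trace (B₂ : Matrix (Fin 2) (Fin 2) ℤ) = t)
    (h3 : ConjTo (B₁ * B₂) (AIstar n)) : False := by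
  obtain ⟨P, hP⟩ := h1
  obtain ⟨R, hR⟩ := h3
  have hB1 : B₁ = P⁻¹ * AI (n + 4) * P := by rw [← hP]; group
  have h12 : B₁ * B₂ = R⁻¹ * AIstar n * R := by rw [← hR]; group
  have hB2 : B₂ = P⁻¹ * ((AI (n + 4))⁻¹ * (P * R⁻¹) * AIstar n * (P * R⁻¹)⁻¹) * P := by
    have h2 : B₂ = B₁⁻¹ * (R⁻¹ * AIstar n * R) := by rw [← h12]; group
    rw [h2, hB1]; group
  have hconj : ConjTo B₂ ((AI (n + 4))⁻¹ * (P * R⁻¹) * AIstar n * (P * R⁻¹)⁻¹) :=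
    ⟨P, by rw [hB2]; group⟩
  have heq := conjTo_trace hconj
  rw [htr, trace_formula (n + 4) n (P * R⁻¹)] at heq
  have hc : (0:ℤ) ≤ (n + 4) * n * (((P * R⁻¹ : SL2Z) : Matrix (Fin 2) (Fin 2) ℤ) 1 0) ^ 2 :=
    mul_nonneg (mul_nonneg (by linarith) (by linarith))
      (sq_nonneg (((P * R⁻¹ : SL2Z) : Matrix (Fin 2) (Fin 2) ℤ) 1 0))
  linarith


/-- Proposition 4.10: for every `n ≥ 1`, the fiber type `I_n*` admits no monodromy
decomposition into `I_{n+4} + II` and none into `I_{n+4} + I₂`. -/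
theorem Instar_no_decomposition (n : ℤ) (hn : 1 ≤ n) :
    (¬ ∃ B₁ B₂ : SL2Z, ConjTo B₁ (AI (n + 4)) ∧ ConjTo B₂ AII ∧
      ConjTo (B₁ * B₂) (AIstar n)) ∧
    (¬ ∃ B₁ B₂ : SL2Z, ConjTo B₁ (AI (n + 4)) ∧ ConjTo B₂ (AI 2) ∧
      ConjTo (B₁ * B₂) (AIstar n)) := by
  constructor
  · rintro ⟨B₁, B₂, h1, h2, h3⟩
    refine key_no_decomp n 1 hn le_rfl B₁ B₂ h1 ?_ h3
    rw [conjTo_trace h2]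
    simp [AII, Matrix.trace_fin_two_of]
  · rintro ⟨B₁, B₂, h1, h2, h3⟩
    refine key_no_decomp n 2 hn one_le_two B₁ B₂ h1 ?_ h3
    rw [conjTo_trace h2]
    simp [AI, Matrix.trace_fin_two_of]
end

section
/- (Splittability of II* into IV* + II) There exist matrices C, B ∈ SL(2,ℤ) with C conjugate in SL(2,ℤ) to A_{IV*} = [[-1,-1],[1,0]] and B conjugate to A_{II} = [[1,1],[-1,0]], such that the product C·B is conjugate in SL(2,ℤ) to A_{II*} = [[0,-1],[1,1]]. In other words, the fiber type II* admits a monodromy decomposition into IV* + II. -/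
theorem ConjTo.refl (A : SL2Z) : ConjTo A A := ⟨1, by simp⟩

theorem AIVstar_mul_AII : AIVstar * AII = AIIstar := by
  ext i j
  fin_cases i <;> fin_cases j <;> rfl

/-- The fiber type `II*` admits a monodromy decomposition into `IV* + II`. -/
theorem IIstar_decomposition_IVstar_II :
    ∃ C B : SL2Z, ConjTo C AIVstar ∧ ConjTo B AII ∧ ConjTo (C * B) AIIstar :=
  ⟨AIVstar, AII, .refl _, .refl _, AIVstar_mul_AII ▸ .refl _⟩
end

section
/- (Splittability of II* into I₅ + I₁ + I₁ + I₁ + I₁ + I₁) There exist matrices C, B₁, B₂, B₃, B₄, B₅ ∈ SL(2,ℤ) with C conjugate in SL(2,ℤ) to A_{I₅} = [[1,5],[0,1]] and B₁, …, B₅ each conjugate to A_{I₁} = [[1,1],[0,1]], such that the product C·B₁·B₂·B₃·B₄·B₅ is conjugate in SL(2,ℤ) to A_{II*} = [[0,-1],[1,1]]. In other words, the fiber type II* admits a monodromy decomposition into I₅ plus five copies of I₁. -/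
/-!
The monodromy of an `I_n` fiber with vanishing cycle a primitive vector `v ∈ ℤ²` is the
transvection `x ↦ x + n · det(v, x) · v`, and completing `v` to a basis of `ℤ²` conjugates it to
`A_{I_n}`. Taking the vanishing cycle `(0,1)` for `I₅` and `(0,1), (0,1), (1,1), (0,1), (1,-1)` for
the five `I₁`, the product is `[[-3,-1],[13,4]]`. Its trace is `1`, so it lies in one of the two
conjugacy classes of trace `1` in `SL(2,ℤ)`, those of `A_{II}` and `A_{II*}`; the conjugator
`[[0,1],[-1,-4]]` shows it is the latter.
-/

lemma conjTo_of_mul_eq_mul {A B : SL2Z} (P : SL2Z)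
    (h : (A : Matrix (Fin 2) (Fin 2) ℤ) * P = P * B) : ConjTo A B :=
  ⟨P⁻¹, by rw [inv_inv, mul_assoc, show A * P = P * B from Subtype.ext h, inv_mul_cancel_left]⟩

/-- The transvection `x ↦ x + n · det((p, q), x) · (p, q)`. -/
def transvection (n p q : ℤ) : SL2Z :=
  ⟨!![1 - n * p * q, n * p ^ 2; -n * q ^ 2, 1 + n * p * q], by
    simp only [Matrix.det_fin_two_of]; ring⟩

lemma conjTo_transvection_AI (n : ℤ) {p q : ℤ} (hpq : IsCoprime p q) :
    ConjTo (transvection n p q) (AI n) := by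
  obtain ⟨a, b, hab⟩ := hpq
  refine conjTo_of_mul_eq_mul ⟨!![p, -b; q, a], by
    simp only [Matrix.det_fin_two_of]; linear_combination hab⟩ ?_
  simp only [transvection, AI, Matrix.mul_fin_two]
  congr 1
  exact Matrix.vec2_eq
    (Matrix.vec2_eq (by ring) (by linear_combination (n * p) * hab))
    (Matrix.vec2_eq (by ring) (by linear_combination (n * q) * hab))

/-- The fiber type `II*` admits a monodromy decomposition into `I₅` plus five
copies of `I₁`. -/
theorem IIstar_decomposition_I5_five_I1 :
    ∃ C B₁ B₂ B₃ B₄ B₅ : SL2Z, ConjTo C (AI 5) ∧ ConjTo B₁ (AI 1) ∧ ConjTo B₂ (AI 1) ∧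
      ConjTo B₃ (AI 1) ∧ ConjTo B₄ (AI 1) ∧ ConjTo B₅ (AI 1) ∧
      ConjTo (C * B₁ * B₂ * B₃ * B₄ * B₅) AIIstar := by
  have h01 : IsCoprime (0 : ℤ) 1 := isCoprime_zero_left.mpr isUnit_one
  refine ⟨transvection 5 0 1, transvection 1 0 1, transvection 1 0 1, transvection 1 1 1,
    transvection 1 0 1, transvection 1 1 (-1), conjTo_transvection_AI 5 h01,
    conjTo_transvection_AI 1 h01, conjTo_transvection_AI 1 h01,
    conjTo_transvection_AI 1 isCoprime_one_left, conjTo_transvection_AI 1 h01,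
    conjTo_transvection_AI 1 isCoprime_one_left, ?_⟩
  refine conjTo_of_mul_eq_mul ⟨!![0, 1; -1, -4], by norm_num [Matrix.det_fin_two_of]⟩ ?_
  decide
end
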